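/- arXiv:2208.14387 — 3 statements merged into one kernel-verified Lean document; each statement's English description precedes it below -/
import Mathlib

section
/- Let R be a simple (possibly noncommutative) ring that has infinite length as a left module over itself. Then every left R-module of finite length is cyclic (generated by a single element). -/
/-- Key lemma (the "simple socle" step of Stafford's theorem): if `R` is a simple
ring of infinite length over itself, `Q` a finite-length module, `x q : Q` with
`span R {q}` an atom, then `q ∈ span R {x + r • q}` for some `r`. -/
lemma stafford_key (R : Type*) [Ring R] [IsSimpleRing R]
    (hR : ¬ IsFiniteLength R R)
    (Q : Type*) [AddCommGroup Q] [Module R Q] (hQ : IsFiniteLength R Q)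
    (x q : Q) (hq : IsAtom (Submodule.span R {q})) :
    ∃ r : R, q ∈ Submodule.span R {x + r • q} := by
  by_contra h
  push_neg at h
  -- Step 1: each `span {x + r•q}` intersects `span {q}` trivially.
  have hstep : ∀ r : R, Submodule.span R {x + r • q} ⊓ Submodule.span R {q} = ⊥ := by
    intro r
    rcases (hq.le_iff.mp inf_le_right) with h0 | h0
    · exact h0
    · exfalso
      have hle : Submodule.span R {q} ≤ Submodule.span R {x + r • q} := by
        rw [← h0]; exact inf_le_left
      exact h r (hle (Submodule.mem_span_singleton_self q))
  -- Step 2: the annihilator of `x` (a left ideal) is nonzero, else `R ↪ Q`.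
  have hker : LinearMap.ker (LinearMap.toSpanSingleton R Q x) ≠ ⊥ := by
    intro hk
    obtain ⟨hN, hA⟩ := isFiniteLength_iff_isNoetherian_isArtinian.mp hQ
    have hinj : Function.Injective (LinearMap.toSpanSingleton R Q x) :=
      LinearMap.ker_eq_bot.mp hk
    exact hR (isFiniteLength_iff_isNoetherian_isArtinian.mpr
      ⟨isNoetherian_of_injective _ hinj, isArtinian_of_injective _ hinj⟩)
  obtain ⟨c, hcx, hc0⟩ := Submodule.exists_mem_ne_zero_of_ne_bot hker
  have hcx' : c • x = 0 := hcx
  -- Step 3: `c * r` annihilates `q` for all `r`.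
  have key : ∀ r : R, (c * r) • q = 0 := by
    intro r
    have h1 : c • (x + r • q) ∈ Submodule.span R {x + r • q} :=
      Submodule.smul_mem _ c (Submodule.mem_span_singleton_self _)
    have h2 : c • (x + r • q) = (c * r) • q := by
      rw [smul_add, hcx', zero_add, smul_smul]
    have h3 : (c * r) • q ∈ Submodule.span R {q} :=
      Submodule.smul_mem _ _ (Submodule.mem_span_singleton_self q)
    have h4 : (c * r) • q ∈ Submodule.span R {x + r • q} ⊓ Submodule.span R {q} :=
      Submodule.mem_inf.mpr ⟨h2 ▸ h1, h3⟩
    rw [hstep r] at h4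
    simpa using h4
  -- Step 4: the two-sided annihilator of `span {q}` contains `c ≠ 0`, hence `1`.
  let I : TwoSidedIdeal R := TwoSidedIdeal.mk'
      {a : R | ∀ m ∈ Submodule.span R {q}, a • m = 0}
      (fun m _ => zero_smul R m)
      (fun {a b} ha hb m hm => by rw [add_smul, ha m hm, hb m hm, add_zero])
      (fun {a} ha m hm => by rw [neg_smul, ha m hm, neg_zero])
      (fun {a b} hb m hm => by rw [mul_smul, hb m hm, smul_zero])
      (fun {a b} ha m hm => by
        rw [mul_smul]; exact ha _ (Submodule.smul_mem _ b hm))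
  have hcI : c ∈ I := by
    rw [TwoSidedIdeal.mem_mk']
    intro m hm
    obtain ⟨t, rfl⟩ := Submodule.mem_span_singleton.mp hm
    rw [smul_smul]; exact key t
  have h1I : (1 : R) ∈ I := IsSimpleRing.one_mem_of_ne_zero_mem I hc0 hcI
  rw [TwoSidedIdeal.mem_mk'] at h1I
  have hq0 : q = 0 := by
    have := h1I q (Submodule.mem_span_singleton_self q)
    simpa using this
  exact hq.1 (by rw [hq0]; simp)

/-- Inductive form of Stafford's theorem: if `span {x} ⊔ Y = ⊤` then some
translate `x + y`, `y ∈ Y`, generates `M`. -/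
lemma stafford_aux (R : Type*) [Ring R] [IsSimpleRing R]
    (hR : ¬ IsFiniteLength R R)
    (M : Type*) [AddCommGroup M] [Module R M] (hM : IsFiniteLength R M) :
    ∀ Y : Submodule R M, ∀ x : M, Submodule.span R {x} ⊔ Y = ⊤ →
      ∃ y ∈ Y, Submodule.span R {x + y} = ⊤ := by
  obtain ⟨hN, hA⟩ := isFiniteLength_iff_isNoetherian_isArtinian.mp hM
  intro Y
  induction Y using WellFoundedLT.induction with
  | ind Y IH =>
    intro x hx
    by_cases hYbot : Y = ⊥
    · refine ⟨0, Submodule.zero_mem Y, ?_⟩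
      rw [add_zero]
      simpa [hYbot] using hx
    · -- find a maximal proper submodule `Y' ⋖ Y`
      obtain ⟨Y', hY'⟩ := exists_covBy_of_wellFoundedGT
        (a := Y) (by simpa [isMin_iff_eq_bot] using hYbot)
      -- work in the quotient `Q = M ⧸ Y'`
      set π : M →ₗ[R] M ⧸ Y' := Y'.mkQ with hπ
      have hker : LinearMap.ker π = Y' := Y'.ker_mkQ
      have hsurj : Function.Surjective π := Submodule.mkQ_surjective Y'
      have hQfl : IsFiniteLength R (M ⧸ Y') :=
        isFiniteLength_iff_isNoetherian_isArtinian.mpr ⟨inferInstance, inferInstance⟩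
      have hmapY' : Submodule.map π Y' = ⊥ := by
        rw [eq_bot_iff]
        rintro z hz
        obtain ⟨w, hw, rfl⟩ := hz
        have : π w = 0 := by rwa [← LinearMap.mem_ker, hker]
        simp [this]
      -- the image of Y in the quotient is an atom
      have hmapbot : Submodule.map π Y ≠ ⊥ := by
        intro hb
        have hYle : Y ≤ Y' := by
          intro z hz
          have hz0 : π z ∈ Submodule.map π Y := Submodule.mem_map_of_mem hz
          rw [hb, Submodule.mem_bot] at hz0
          exact hker ▸ LinearMap.mem_ker.mpr hz0
        exact absurd (le_antisymm hY'.le hYle) (ne_of_lt hY'.lt)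
      have hmapatom : IsAtom (Submodule.map π Y) := by
        refine ⟨hmapbot, fun b hb => ?_⟩
        have hcm : Submodule.comap π b < Y := by
          refine lt_of_le_of_ne ?_ ?_
          · calc Submodule.comap π b ≤ Submodule.comap π (Submodule.map π Y) :=
                  Submodule.comap_mono hb.le
              _ = Y ⊔ Y' := by rw [Submodule.comap_map_eq, hker]
              _ = Y := sup_eq_left.mpr hY'.le
          · intro heq
            apply ne_of_lt hb
            rw [← heq, Submodule.map_comap_eq_of_surjective hsurj]
        have hY'le : Y' ≤ Submodule.comap π b := fun z hz => by
          have : π z = 0 := by rwa [← LinearMap.mem_ker, hker]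
          simp only [Submodule.mem_comap, this]
          exact b.zero_mem
        have hcY' : Submodule.comap π b = Y' :=
          (eq_of_le_of_not_lt hY'le (fun hlt => hY'.2 hlt hcm)).symm
        rw [← Submodule.map_comap_eq_of_surjective hsurj b, hcY', hmapY']
      -- choose a cyclic generator of the atom
      obtain ⟨qbar, hqmem, hq0⟩ := Submodule.exists_mem_ne_zero_of_ne_bot hmapbot
      have hspan : Submodule.span R {qbar} = Submodule.map π Y := by
        rcases hmapatom.le_iff.mp
            (Submodule.span_le.mpr (Set.singleton_subset_iff.mpr hqmem)) with h0 | h0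
        · exact absurd (h0 ▸ Submodule.mem_span_singleton_self qbar)
            (by simpa [Submodule.mem_bot] using hq0)
        · exact h0
      have hatomq : IsAtom (Submodule.span R {qbar}) := hspan ▸ hmapatom
      obtain ⟨y₀, hy₀Y, hy₀⟩ := hqmem
      obtain ⟨r, hr⟩ := stafford_key R hR (M ⧸ Y') hQfl (π x) qbar hatomq
      set x' := x + r • y₀ with hx'
      have hπx' : π x' = π x + r • qbar := by
        rw [hx', map_add, map_smul, hy₀]
      rw [← hπx'] at hr
      have h5 : Submodule.map π Y ≤ Submodule.map π (Submodule.span R {x'}) := by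
        rw [← hspan, Submodule.span_le, Set.singleton_subset_iff]
        rw [Submodule.map_span, Set.image_singleton]
        exact hr
      have h6 : Y ≤ Submodule.span R {x'} ⊔ Y' := by
        calc Y ≤ Submodule.comap π (Submodule.map π Y) := Submodule.le_comap_map π Y
          _ ≤ Submodule.comap π (Submodule.map π (Submodule.span R {x'})) :=
              Submodule.comap_mono h5
          _ = Submodule.span R {x'} ⊔ Y' := by rw [Submodule.comap_map_eq, hker]
      have h7 : Submodule.span R {x'} ⊔ Y' = ⊤ := by
        rw [eq_top_iff, ← hx]
        refine sup_le ?_ h6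
        rw [Submodule.span_le, Set.singleton_subset_iff]
        have hx'mem : x' ∈ Submodule.span R {x'} ⊔ Y' :=
          Submodule.mem_sup_left (Submodule.mem_span_singleton_self x')
        have hy₀mem : r • y₀ ∈ Submodule.span R {x'} ⊔ Y' :=
          h6 (Submodule.smul_mem Y r hy₀Y)
        have hxeq : x = x' - r • y₀ := by rw [hx']; abel
        rw [hxeq]
        exact Submodule.sub_mem _ hx'mem hy₀mem
      obtain ⟨y₂, hy₂, hy₂top⟩ := IH Y' hY'.lt x' h7
      refine ⟨r • y₀ + y₂,
        Submodule.add_mem Y (Submodule.smul_mem Y r hy₀Y) (hY'.le hy₂), ?_⟩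
      rw [← add_assoc]
      exact hy₂top

/-- **Stafford's theorem.** If `R` is a simple ring of infinite length as a left
module over itself, then every left `R`-module of finite length is cyclic. -/
theorem stafford_cyclic (R : Type*) [Ring R] [IsSimpleRing R]
    (hR : ¬ IsFiniteLength R R)
    (M : Type*) [AddCommGroup M] [Module R M] (hM : IsFiniteLength R M) :
    ∃ m : M, Submodule.span R {m} = ⊤ := by
  obtain ⟨y, _, hy⟩ := stafford_aux R hR M hM ⊤ 0 (by simp)
  exact ⟨0 + y, hy⟩
end

section
/- Let A be a commutative noetherian ring, D = A[∂] a polynomial ring in one variable filtered by degree in ∂, and M a finitely generated D-module equipped with a good filtration Fil^i M (i.e., Fil is exhaustive, Fil^i(D)·Fil^j(M) ⊆ Fil^{i+j}(M), each Fil^i M is a finitely generated A-module, and gr M is finitely generated over gr D = A[ξ]). Suppose the annihilator of gr M in A[ξ] contains ξ^d for some d ≥ 1 and that Fil^{i}(D)·Fil^{j}(M) = Fil^{i+j}(M) for all i, j. Then Fil^{n}(M) = M for all n ≥ d − 1; in particular M is finitely generated as an A-module. -/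
/-- Stabilization of a good filtration: let `M` be a module over `D = A[∂]`
(encoded by the `A`-linear action `τ` of `∂`), with a good filtration `Fil` such
that `Fil^i(D)·Fil^j(M) = Fil^{i+j}(M)` and such that `ξ^d` annihilates `gr M`
(i.e. `∂^d·Fil^i ⊆ Fil^{i+d-1}`). Then `Fil^n M = M` for all `n ≥ d - 1`; in
particular `M` is a finitely generated `A`-module. -/
theorem filtration_stabilizes_of_xi_pow_annihilates
    (A : Type*) [CommRing A] [IsNoetherianRing A]
    (M : Type*) [AddCommGroup M] [Module A M]
    (τ : M →ₗ[A] M)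
    (Fil : ℕ → Submodule A M)
    (hmono : Monotone Fil)
    (hexh : ⨆ n, Fil n = ⊤)
    (hfg : ∀ n, (Fil n).FG)
    (hgen : ∀ i j : ℕ,
      Fil (i + j) = ⨆ ℓ ∈ Finset.range (i + 1), Submodule.map (τ ^ ℓ) (Fil j))
    (d : ℕ) (hd : 1 ≤ d)
    (hann : ∀ i : ℕ, Submodule.map (τ ^ d) (Fil i) ≤ Fil (i + d - 1)) :
    (∀ n : ℕ, d - 1 ≤ n → Fil n = ⊤) ∧ Module.Finite A M := by
  -- each τ^ℓ · Fil n lands in Fil (ℓ + n)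
  have hle : ∀ ℓ n : ℕ, Submodule.map (τ ^ ℓ) (Fil n) ≤ Fil (ℓ + n) := by
    intro ℓ n
    rw [hgen ℓ n]
    exact le_iSup₂ (f := fun ℓ' (_ : ℓ' ∈ Finset.range (ℓ + 1)) =>
      Submodule.map (τ ^ ℓ') (Fil n)) ℓ (Finset.self_mem_range_succ ℓ)
  -- key step: the filtration stops growing at stage d-1
  have key : ∀ n : ℕ, Fil (n + d) = Fil (n + (d - 1)) := by
    intro n
    apply le_antisymm
    · have h := hgen d n
      rw [Nat.add_comm d n] at h
      rw [h]
      apply iSup₂_le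
      intro ℓ hℓ
      rw [Finset.mem_range] at hℓ
      rcases Nat.lt_succ_iff_lt_or_eq.mp hℓ with h' | rfl
      · exact le_trans (hle ℓ n) (hmono (by omega))
      · exact le_trans (hann n) (le_of_eq (by congr 1; omega))
    · exact hmono (by omega)
  have stab : ∀ k : ℕ, Fil (d - 1 + k) = Fil (d - 1) := by
    intro k
    induction k with
    | zero => rfl
    | succ k ih =>
      have h1 : d - 1 + (k + 1) = k + d := by omega
      have h2 : k + (d - 1) = d - 1 + k := by omega
      rw [h1, key k, h2, ih]
  have htop : Fil (d - 1) = ⊤ := by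
    apply top_unique
    rw [← hexh]
    apply iSup_le
    intro n
    calc Fil n ≤ Fil (d - 1 + n) := hmono (Nat.le_add_left n (d - 1))
      _ = Fil (d - 1) := stab n
  refine ⟨fun n hn => top_unique (htop ▸ hmono hn), ?_⟩
  rw [Module.finite_def, ← htop]
  exact hfg (d - 1)
end

section
/- Let K be a complete valued field, A a K-Banach algebra of countable type which is a projective limit A = lim_k A_k of K-Banach algebras along continuous ring maps, and let M = lim_k M_k be a projective limit of finite free modules M_k over a fixed commutative Banach K-algebra O, where each transition map λ_k : M_{k+1} → M_k is O-linear with dense image and each M_k is free of the same finite rank n over O, with O-finite free modules carrying their canonical Banach topology in which every O-submodule that is finitely generated is closed. Then each λ_k is surjective, hence an isomorphism of O-modules, and therefore M is a free O-module of rank n. -/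
/-!
The image of a transition map `λ_k` is finitely generated, since its source is, hence closed;
being also dense, it is everything. A surjection between finite free modules of the same rank
over a commutative ring is bijective (Orzech), and once every transition map is bijective,
evaluation at the index `0` identifies the inverse limit with `M 0`.
-/

open Function

theorem DenseRange.surjective_of_isClosed_range {α β : Type*} [TopologicalSpace β] {f : α → β}
    (hd : DenseRange f) (hc : IsClosed (Set.range f)) : Surjective f :=
  Set.range_eq_univ.mp (hc.closure_eq ▸ hd.closure_range)

theorem LinearMap.surjective_of_denseRange {R M P : Type*} [Semiring R] [AddCommMonoid M]
    [Module R M] [Module.Finite R M] [AddCommMonoid P] [Module R P] [TopologicalSpace P]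
    (f : M →ₗ[R] P) (hclosed : ∀ N : Submodule R P, N.FG → IsClosed (N : Set P))
    (hd : DenseRange f) : Surjective f :=
  hd.surjective_of_isClosed_range (LinearMap.coe_range f ▸ hclosed _ (Submodule.fg_range f))

section SequentialLimit

variable {R : Type*} [Ring R] {M : ℕ → Type*} [∀ k, AddCommGroup (M k)] [∀ k, Module R (M k)]

def sequentialLimit (f : ∀ k, M (k + 1) →ₗ[R] M k) : Submodule R (∀ k, M k) :=
  ⨅ k : ℕ, LinearMap.ker ((f k).comp (LinearMap.proj (k + 1)) - LinearMap.proj k)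

variable {f : ∀ k, M (k + 1) →ₗ[R] M k}

theorem mem_sequentialLimit {x : ∀ k, M k} :
    x ∈ sequentialLimit f ↔ ∀ k, f k (x (k + 1)) = x k := by
  simp [sequentialLimit, Submodule.mem_iInf, sub_eq_zero]

theorem sequentialLimit_eval_zero_injective (hf : ∀ k, Injective (f k)) :
    Injective fun x : sequentialLimit f => (x : ∀ k, M k) 0 := by
  rintro ⟨x, hx⟩ ⟨y, hy⟩ (h0 : x 0 = y 0)
  rw [mem_sequentialLimit] at hx hy
  have hxy : ∀ k, x k = y k := by
    intro k
    induction k with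
    | zero => exact h0
    | succ k ih => exact hf k (by rw [hx, hy, ih])
  exact Subtype.ext (funext hxy)

theorem sequentialLimit_eval_zero_surjective (hf : ∀ k, Surjective (f k)) :
    Surjective fun x : sequentialLimit f => (x : ∀ k, M k) 0 := by
  intro m
  let x : ∀ k, M k := fun k => Nat.rec m (fun k y => surjInv (hf k) y) k
  exact ⟨⟨x, mem_sequentialLimit.mpr fun k => surjInv_eq (hf k) (x k)⟩, rfl⟩

noncomputable def sequentialLimitEquivOfBijective (hf : ∀ k, Bijective (f k)) :
    sequentialLimit f ≃ₗ[R] M 0 :=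
  LinearEquiv.ofBijective ((LinearMap.proj 0).comp (sequentialLimit f).subtype)
    ⟨sequentialLimit_eval_zero_injective fun k => (hf k).1,
      sequentialLimit_eval_zero_surjective fun k => (hf k).2⟩

end SequentialLimit

theorem limit_free_of_dense_transition_maps_general
    (O : Type*) [CommRing O]
    (n : ℕ)
    (M : ℕ → Type*) [∀ k, AddCommGroup (M k)] [∀ k, Module O (M k)]
    [∀ k, TopologicalSpace (M k)]
    [∀ k, Module.Free O (M k)] [∀ k, Module.Finite O (M k)]
    (hrank : ∀ k, Module.finrank O (M k) = n)
    (lam : ∀ k : ℕ, M (k + 1) →ₗ[O] M k)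
    (hdense : ∀ k, DenseRange (lam k))
    (hclosed : ∀ (k : ℕ) (N : Submodule O (M k)), N.FG → IsClosed (N : Set (M k))) :
    (∀ k, Function.Surjective (lam k)) ∧
    (∀ k, Function.Bijective (lam k)) ∧
    Module.Free O
      ↥(⨅ k : ℕ, LinearMap.ker
        ((lam k).comp (LinearMap.proj (k + 1)) - LinearMap.proj k)) ∧
    Module.finrank O
      ↥(⨅ k : ℕ, LinearMap.ker
        ((lam k).comp (LinearMap.proj (k + 1)) - LinearMap.proj k)) = n := by
  have hsurj : ∀ k, Surjective (lam k) := fun k =>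
    (lam k).surjective_of_denseRange (hclosed k) (hdense k)
  have hbij : ∀ k, Bijective (lam k) := fun k =>
    OrzechProperty.bijective_of_surjective_of_finrank_le _ (hsurj k) (by rw [hrank, hrank])
  let e : sequentialLimit lam ≃ₗ[O] M 0 := sequentialLimitEquivOfBijective hbij
  exact ⟨hsurj, hbij, Module.Free.of_equiv e.symm, e.finrank_eq.trans (hrank 0)⟩

/-- Let `O` be a commutative noetherian topological (Banach) algebra in which every
finitely generated submodule of a topological `O`-module under consideration is
closed, and let `M = lim M_k` be a projective limit of free `O`-modules of the same
finite rank `n` along `O`-linear transition maps with dense image. Then each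
transition map is surjective, hence bijective, and the limit is a free `O`-module of
rank `n`. -/
theorem limit_free_of_dense_transition_maps
    (O : Type*) [CommRing O] [IsNoetherianRing O] [Nontrivial O]
    (n : ℕ)
    (M : ℕ → Type*) [∀ k, AddCommGroup (M k)] [∀ k, Module O (M k)]
    [∀ k, TopologicalSpace (M k)]
    [∀ k, Module.Free O (M k)] [∀ k, Module.Finite O (M k)]
    (hrank : ∀ k, Module.finrank O (M k) = n)
    (lam : ∀ k : ℕ, M (k + 1) →ₗ[O] M k)
    (hdense : ∀ k, DenseRange (lam k))
    (hclosed : ∀ (k : ℕ) (N : Submodule O (M k)), N.FG → IsClosed (N : Set (M k))) :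
    (∀ k, Function.Surjective (lam k)) ∧
    (∀ k, Function.Bijective (lam k)) ∧
    Module.Free O
      ↥(⨅ k : ℕ, LinearMap.ker
        ((lam k).comp (LinearMap.proj (k + 1)) - LinearMap.proj k)) ∧
    Module.finrank O
      ↥(⨅ k : ℕ, LinearMap.ker
        ((lam k).comp (LinearMap.proj (k + 1)) - LinearMap.proj k)) = n :=
  limit_free_of_dense_transition_maps_general O n M hrank lam hdense hclosed
end
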